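/- Let d ≥ 1 and let ρ be a group homomorphism from SO(3) (real 3×3 matrices R with Rᵀ R = 1 and det R = 1) to the orthogonal linear isometries of ℝ^d such that the only subspaces of ℝ^d invariant under all ρ(R) are 0 and ℝ^d (ρ is irreducible). Suppose Y and Ỹ are functions from the unit sphere {x ∈ ℝ³ : ‖x‖ = 1} to ℝ^d that are equivariant, i.e. Y(R x) = ρ(R) Y(x) and Ỹ(R x) = ρ(R) Ỹ(x) for all R ∈ SO(3) and all unit vectors x, and normalized, i.e. ‖Y(x)‖ = ‖Ỹ(x)‖ = 1 for all unit vectors x. Then Ỹ = Y or Ỹ = −Y. -/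

import Mathlib

/-!
The function `(x, y) ↦ ⟪Y x, Ỹ y⟫` on the sphere is invariant under simultaneous rotation, and
for any two unit vectors `x, y` the half-turn about their bisector (about an axis orthogonal to `x`
if `y = -x`) swaps them; hence
`⟪Y x, Ỹ y⟫ = ⟪Ỹ x, Y y⟫`. Since the values of `Y` span `ℝ^d` (irreducibility), this symmetry
makes `Y x ↦ Ỹ x` a well defined symmetric operator `T` commuting with `ρ`. An eigenspace of `T`
is invariant, so it is everything and `T = c • id`; the normalization forces `c = ±1`.
-/

open Matrix RealInnerProductSpace

section Irreducible

variable {V : Type*} [NormedAddCommGroup V] [InnerProductSpace ℝ V]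
  {ι X : Type*} (σ : ι → V →ₗ[ℝ] V) {act : ι → X → X}

theorem span_range_eq_top_of_irreducible
    (hirr : ∀ W : Submodule ℝ V, (∀ i, ∀ w ∈ W, σ i w ∈ W) → W = ⊥ ∨ W = ⊤)
    {f : X → V} (hf : ∀ i x, f (act i x) = σ i (f x)) {x₀ : X} (hx₀ : f x₀ ≠ 0) :
    Submodule.span ℝ (Set.range f) = ⊤ := by
  refine (hirr _ fun i w hw => ?_).resolve_left fun hbot => hx₀ ?_
  · refine (Submodule.span_le (p := (Submodule.span ℝ (Set.range f)).comap (σ i))).mpr ?_ hw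
    rintro _ ⟨x, rfl⟩
    rw [SetLike.mem_coe, Submodule.mem_comap, ← hf]
    exact Submodule.subset_span ⟨act i x, rfl⟩
  · rw [← Submodule.mem_bot ℝ, ← hbot]
    exact Submodule.subset_span ⟨x₀, rfl⟩

theorem inner_apply_comm_of_swap (hσ : ∀ i v w, ⟪σ i v, σ i w⟫ = ⟪v, w⟫)
    {f g : X → V} (hf : ∀ i x, f (act i x) = σ i (f x)) (hg : ∀ i x, g (act i x) = σ i (g x))
    (hswap : ∀ x y, ∃ i, act i x = y ∧ act i y = x) (x y : X) :
    ⟪f x, g y⟫ = ⟪g x, f y⟫ := by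
  obtain ⟨i, hxy, hyx⟩ := hswap x y
  calc ⟪f x, g y⟫ = ⟪σ i (f x), σ i (g y)⟫ := (hσ i _ _).symm
    _ = ⟪f y, g x⟫ := by rw [← hf, ← hg, hxy, hyx]
    _ = ⟪g x, f y⟫ := real_inner_comm _ _

theorem exists_isSymmetric_apply_eq {f g : X → V}
    (hspan : Submodule.span ℝ (Set.range f) = ⊤) (hfg : ∀ x y, ⟪f x, g y⟫ = ⟪g x, f y⟫) :
    ∃ T : V →ₗ[ℝ] V, T.IsSymmetric ∧ ∀ x, T (f x) = g x := by
  set F := Finsupp.linearCombination ℝ f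
  set G := Finsupp.linearCombination ℝ g
  have hF : Function.Surjective F := by
    rw [← LinearMap.range_eq_top, Finsupp.range_linearCombination, hspan]
  have hGF : ∀ c c', ⟪G c, F c'⟫ = ⟪F c, G c'⟫ := by
    have hGf : ∀ c y, ⟪G c, f y⟫ = ⟪F c, g y⟫ := by
      intro c y
      induction c using Finsupp.induction_linear with
      | zero => simp
      | add c₁ c₂ h₁ h₂ => simp only [map_add, inner_add_left, h₁, h₂]
      | single x a => simp [F, G, inner_smul_left, hfg]
    intro c c'
    induction c' using Finsupp.induction_linear with
    | zero => simp
    | add c₁ c₂ h₁ h₂ => simp only [map_add, inner_add_right, h₁, h₂]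
    | single y b => simp [F, G, inner_smul_right, hGf]
  -- the symmetry of the kernel is what makes `f x ↦ g x` well defined
  have hker : LinearMap.ker F ≤ LinearMap.ker G := by
    intro c hc
    obtain ⟨c', hc'⟩ := hF (G c)
    rw [LinearMap.mem_ker, ← inner_self_eq_zero (𝕜 := ℝ)]
    nth_rw 2 [← hc']
    rw [hGF, LinearMap.mem_ker.mp hc, inner_zero_left]
  let T := (LinearMap.ker F).liftQ G hker ∘ₗ (F.quotKerEquivOfSurjective hF).symm.toLinearMap
  have hT : ∀ c, T (F c) = G c := fun c => by simp [T]
  refine ⟨T, fun v w => ?_, fun x => by simpa [F, G] using hT (Finsupp.single x 1)⟩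
  obtain ⟨c, rfl⟩ := hF v
  obtain ⟨c', rfl⟩ := hF w
  rw [hT, hT, hGF]

theorem commute_of_apply_eq {f g : X → V} (hspan : Submodule.span ℝ (Set.range f) = ⊤)
    (hf : ∀ i x, f (act i x) = σ i (f x)) (hg : ∀ i x, g (act i x) = σ i (g x))
    {T : V →ₗ[ℝ] V} (hT : ∀ x, T (f x) = g x) (i : ι) : Commute T (σ i) :=
  LinearMap.ext_on_range hspan fun x => by
    simp only [Module.End.mul_apply, ← hf, hT, hg]

theorem LinearMap.IsSymmetric.exists_eq_smul_of_irreducible [FiniteDimensional ℝ V]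
    [Nontrivial V] (hirr : ∀ W : Submodule ℝ V, (∀ i, ∀ w ∈ W, σ i w ∈ W) → W = ⊥ ∨ W = ⊤)
    {T : V →ₗ[ℝ] V} (hT : T.IsSymmetric) (hcomm : ∀ i, Commute T (σ i)) :
    ∃ c : ℝ, ∀ v, T v = c • v := by
  obtain ⟨c, hc⟩ : ∃ c, Module.End.HasEigenvalue T c :=
    ⟨_, hT.hasEigenvalue_iSup_of_finiteDimensional⟩
  have hinv : ∀ i, ∀ w ∈ Module.End.eigenspace T c, σ i w ∈ Module.End.eigenspace T c := by
    intro i w hw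
    rw [Module.End.mem_eigenspace_iff] at hw ⊢
    rw [← Module.End.mul_apply, (hcomm i).eq, Module.End.mul_apply, hw, map_smul]
  have htop := (hirr _ hinv).resolve_left hc
  exact ⟨c, fun v => Module.End.mem_eigenspace_iff.mp (htop ▸ Submodule.mem_top)⟩

theorem exists_forall_eq_smul_of_irreducible [FiniteDimensional ℝ V]
    (hirr : ∀ W : Submodule ℝ V, (∀ i, ∀ w ∈ W, σ i w ∈ W) → W = ⊥ ∨ W = ⊤)
    (hσ : ∀ i v w, ⟪σ i v, σ i w⟫ = ⟪v, w⟫) (hswap : ∀ x y, ∃ i, act i x = y ∧ act i y = x)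
    {f g : X → V} (hf : ∀ i x, f (act i x) = σ i (f x)) (hg : ∀ i x, g (act i x) = σ i (g x))
    {x₀ : X} (hx₀ : f x₀ ≠ 0) : ∃ c : ℝ, ∀ x, g x = c • f x := by
  have : Nontrivial V := ⟨⟨_, _, hx₀⟩⟩
  have hspan := span_range_eq_top_of_irreducible σ hirr hf hx₀
  obtain ⟨T, hTsymm, hT⟩ :=
    exists_isSymmetric_apply_eq hspan (inner_apply_comm_of_swap σ hσ hf hg hswap)
  obtain ⟨c, hc⟩ :=
    hTsymm.exists_eq_smul_of_irreducible σ hirr (commute_of_apply_eq σ hspan hf hg hT)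
  exact ⟨c, fun x => (hT x).symm.trans (hc _)⟩

end Irreducible

section HalfTurn

variable {n : Type*} [DecidableEq n]

/-- The rotation by `π` about the axis `u` (when `u ⬝ᵥ u = 1`). -/
def halfTurn (u : n → ℝ) : Matrix n n ℝ := (2 : ℝ) • vecMulVec u u - 1

theorem halfTurn_mulVec [Fintype n] (u x : n → ℝ) :
    halfTurn u *ᵥ x = (2 * (u ⬝ᵥ x)) • u - x := by
  simp [halfTurn, sub_mulVec, smul_mulVec, vecMulVec_mulVec, mul_smul]

theorem halfTurn_transpose (u : n → ℝ) : (halfTurn u)ᵀ = halfTurn u := by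
  simp [halfTurn, transpose_vecMulVec]

theorem halfTurn_mul_self [Fintype n] {u : n → ℝ} (hu : u ⬝ᵥ u = 1) :
    halfTurn u * halfTurn u = 1 := by
  have : vecMulVec u u * vecMulVec u u = vecMulVec u u := by
    rw [vecMulVec_mul_vecMulVec, hu, one_smul]
  simp only [halfTurn, sub_mul, mul_sub, smul_mul_smul, this, mul_one, one_mul, mul_smul]
  module

theorem det_halfTurn [Fintype n] {u : n → ℝ} (hu : u ⬝ᵥ u = 1) (hodd : Odd (Fintype.card n)) :
    (halfTurn u).det = 1 := by
  have hdet : (1 + vecMulVec ((-2 : ℝ) • u) u).det = 1 + u ⬝ᵥ ((-2 : ℝ) • u) := by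
    rw [vecMulVec_eq (Fin 1)]
    exact det_one_add_replicateCol_mul_replicateRow _ _
  have : halfTurn u = -(1 + vecMulVec ((-2 : ℝ) • u) u) := by
    rw [halfTurn, smul_vecMulVec]
    module
  rw [this, det_neg, hdet, hodd.neg_one_pow, dotProduct_smul, hu]
  norm_num

theorem halfTurn_mem_specialOrthogonalGroup [Fintype n] {u : n → ℝ} (hu : u ⬝ᵥ u = 1)
    (hodd : Odd (Fintype.card n)) : halfTurn u ∈ specialOrthogonalGroup n ℝ := by
  rw [mem_specialOrthogonalGroup_iff, mem_orthogonalGroup_iff, halfTurn_transpose]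
  exact ⟨halfTurn_mul_self hu, det_halfTurn hu hodd⟩

theorem toEuclideanLin_halfTurn [Fintype n] (u z : EuclideanSpace ℝ n) :
    toEuclideanLin (halfTurn (WithLp.ofLp u)) z = (2 * ⟪u, z⟫) • u - z := by
  ext i
  simp [halfTurn_mulVec, EuclideanSpace.inner_eq_star_dotProduct, dotProduct_comm]

end HalfTurn

theorem exists_norm_eq_one_two_inner_smul_sub_eq {E : Type*} [NormedAddCommGroup E]
    [InnerProductSpace ℝ E] [FiniteDimensional ℝ E] (hE : 2 ≤ Module.finrank ℝ E) {x y : E}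
    (hx : ‖x‖ = 1) (hy : ‖y‖ = 1) : ∃ u : E, ‖u‖ = 1 ∧ (2 * ⟪u, x⟫) • u - x = y := by
  by_cases hxy : x + y = 0
  · have hx0 : x ≠ 0 := norm_ne_zero_iff.mp (hx ▸ one_ne_zero)
    have hperp : (ℝ ∙ x)ᗮ ≠ ⊥ := by
      rw [Ne, Submodule.orthogonal_eq_bot_iff]
      intro htop
      have := finrank_span_singleton (K := ℝ) hx0
      rw [htop, finrank_top] at this
      omega
    obtain ⟨w, hw, hw0⟩ := Submodule.exists_mem_ne_zero_of_ne_bot hperp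
    have hwx : ⟪w, x⟫ = 0 := Submodule.mem_orthogonal_singleton_iff_inner_left.mp hw
    refine ⟨‖w‖⁻¹ • w, norm_smul_inv_norm hw0, ?_⟩
    rw [real_inner_smul_left, hwx, mul_zero, mul_zero, zero_smul, zero_sub]
    exact neg_eq_of_add_eq_zero_right hxy
  · have hs : ‖x + y‖ ≠ 0 := norm_ne_zero_iff.mpr hxy
    have hsq : ‖x + y‖ ^ 2 = 2 * ⟪x + y, x⟫ := by
      rw [norm_add_sq_real, inner_add_left, real_inner_self_eq_norm_sq, hx, hy,
        real_inner_comm y x]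
      ring
    refine ⟨‖x + y‖⁻¹ • (x + y), by rw [norm_smul, norm_inv, norm_norm, inv_mul_cancel₀ hs], ?_⟩
    rw [real_inner_smul_left, smul_smul,
      show 2 * (‖x + y‖⁻¹ * ⟪x + y, x⟫) * ‖x + y‖⁻¹ = 1 by field_simp; linarith, one_smul]
    abel

section Orthogonal

variable {n : Type*} [Fintype n] [DecidableEq n]

theorem inner_toEuclideanLin_of_mem_orthogonalGroup {A : Matrix n n ℝ}
    (hA : A ∈ orthogonalGroup n ℝ) (x y : EuclideanSpace ℝ n) :
    ⟪toEuclideanLin A x, toEuclideanLin A y⟫ = ⟪x, y⟫ := by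
  rw [mem_orthogonalGroup_iff'] at hA
  simp only [EuclideanSpace.inner_eq_star_dotProduct, star_trivial, toLpLin_apply]
  rw [dotProduct_mulVec, ← vecMul_transpose, vecMul_vecMul, hA, vecMul_one]

theorem norm_toEuclideanLin_of_mem_orthogonalGroup {A : Matrix n n ℝ}
    (hA : A ∈ orthogonalGroup n ℝ) (x : EuclideanSpace ℝ n) : ‖toEuclideanLin A x‖ = ‖x‖ :=
  (LinearMap.isometryOfInner _ (inner_toEuclideanLin_of_mem_orthogonalGroup hA)).norm_map x

theorem exists_mem_specialOrthogonalGroup_swap (hodd : Odd (Fintype.card n))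
    (htwo : 2 ≤ Fintype.card n) {x y : EuclideanSpace ℝ n} (hx : ‖x‖ = 1) (hy : ‖y‖ = 1) :
    ∃ R ∈ specialOrthogonalGroup n ℝ, toEuclideanLin R x = y ∧ toEuclideanLin R y = x := by
  obtain ⟨u, hu, hux⟩ := exists_norm_eq_one_two_inner_smul_sub_eq
    (by rwa [finrank_euclideanSpace]) hx hy
  have huu : WithLp.ofLp u ⬝ᵥ WithLp.ofLp u = 1 := by
    have h := real_inner_self_eq_norm_sq u
    rwa [hu, one_pow, EuclideanSpace.inner_eq_star_dotProduct, star_trivial] at h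
  refine ⟨halfTurn (WithLp.ofLp u), halfTurn_mem_specialOrthogonalGroup huu hodd, ?_, ?_⟩
  · rw [toEuclideanLin_halfTurn, hux]
  · rw [← hux, ← toEuclideanLin_halfTurn, ← LinearMap.comp_apply, ← toLpLin_mul_same,
      halfTurn_mul_self huu, toLpLin_one, LinearMap.id_apply]

end Orthogonal

theorem equivariant_sphere_map_unique_up_to_sign_general
    (d : ℕ)
    (ρ : Matrix.specialOrthogonalGroup (Fin 3) ℝ →* Matrix.orthogonalGroup (Fin d) ℝ)
    (hirr : ∀ W : Submodule ℝ (EuclideanSpace ℝ (Fin d)),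
      (∀ R : Matrix.specialOrthogonalGroup (Fin 3) ℝ, ∀ w ∈ W,
        WithLp.toLp 2 ((ρ R : Matrix (Fin d) (Fin d) ℝ).mulVec w) ∈ W) →
      W = ⊥ ∨ W = ⊤)
    (Y Ytil : EuclideanSpace ℝ (Fin 3) → EuclideanSpace ℝ (Fin d))
    (hY : ∀ R : Matrix.specialOrthogonalGroup (Fin 3) ℝ,
      ∀ x : EuclideanSpace ℝ (Fin 3), ‖x‖ = 1 →
        Y (WithLp.toLp 2 ((R : Matrix (Fin 3) (Fin 3) ℝ).mulVec x))
          = (ρ R : Matrix (Fin d) (Fin d) ℝ).mulVec (Y x))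
    (hYtil : ∀ R : Matrix.specialOrthogonalGroup (Fin 3) ℝ,
      ∀ x : EuclideanSpace ℝ (Fin 3), ‖x‖ = 1 →
        Ytil (WithLp.toLp 2 ((R : Matrix (Fin 3) (Fin 3) ℝ).mulVec x))
          = (ρ R : Matrix (Fin d) (Fin d) ℝ).mulVec (Ytil x))
    (hnormY : ∀ x : EuclideanSpace ℝ (Fin 3), ‖x‖ = 1 → ‖Y x‖ = 1)
    (hnormYtil : ∀ x : EuclideanSpace ℝ (Fin 3), ‖x‖ = 1 → ‖Ytil x‖ = 1) :
    (∀ x : EuclideanSpace ℝ (Fin 3), ‖x‖ = 1 → Ytil x = Y x)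
    ∨ (∀ x : EuclideanSpace ℝ (Fin 3), ‖x‖ = 1 → Ytil x = -Y x) := by
  let S := Metric.sphere (0 : EuclideanSpace ℝ (Fin 3)) 1
  have hS : ∀ x : S, ‖(x : EuclideanSpace ℝ (Fin 3))‖ = 1 :=
    fun x => mem_sphere_zero_iff_norm.mp x.2
  let act (R : specialOrthogonalGroup (Fin 3) ℝ) (x : S) : S :=
    ⟨toEuclideanLin (R : Matrix (Fin 3) (Fin 3) ℝ) x, mem_sphere_zero_iff_norm.mpr <|
      (norm_toEuclideanLin_of_mem_orthogonalGroup
        (mem_specialOrthogonalGroup_iff.mp R.2).1 _).trans (hS x)⟩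
  have hswap : ∀ x y : S, ∃ R, act R x = y ∧ act R y = x := fun x y => by
    obtain ⟨R, hR, hxy, hyx⟩ :=
      exists_mem_specialOrthogonalGroup_swap (by decide) (by decide) (hS x) (hS y)
    exact ⟨⟨R, hR⟩, Subtype.ext hxy, Subtype.ext hyx⟩
  let x₀ : S := ⟨EuclideanSpace.single 0 1, mem_sphere_zero_iff_norm.mpr (by simp)⟩
  obtain ⟨c, hc⟩ := exists_forall_eq_smul_of_irreducible
    (fun R => toEuclideanLin (ρ R : Matrix (Fin d) (Fin d) ℝ)) hirr
    (fun R => inner_toEuclideanLin_of_mem_orthogonalGroup (ρ R).2) hswap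
    (f := fun x => Y x) (g := fun x => Ytil x)
    (fun R x => congrArg (WithLp.toLp 2) (hY R x (hS x)))
    (fun R x => congrArg (WithLp.toLp 2) (hYtil R x (hS x)))
    (x₀ := x₀) (norm_ne_zero_iff.mp (by simp [hnormY _ (hS x₀)]))
  have hc1 : |c| = 1 := by
    simpa [norm_smul, hnormY _ (hS x₀), hnormYtil _ (hS x₀)] using (congrArg norm (hc x₀)).symm
  rcases abs_eq zero_le_one |>.mp hc1 with rfl | rfl
  · exact Or.inl fun x hx => by simpa using hc ⟨x, mem_sphere_zero_iff_norm.mpr hx⟩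
  · exact Or.inr fun x hx => by simpa using hc ⟨x, mem_sphere_zero_iff_norm.mpr hx⟩

/-- **Uniqueness of spherical harmonics up to sign.**
If `ρ` is an irreducible orthogonal representation of SO(3) on `ℝ^d` (`d ≥ 1`)
and `Y`, `Ỹ` are two normalized (`‖Y x‖ = 1`) equivariant functions from the
unit sphere of `ℝ³` to `ℝ^d`, then `Ỹ = Y` or `Ỹ = −Y` on the unit sphere. -/
theorem equivariant_sphere_map_unique_up_to_sign
    (d : ℕ) (hd : 1 ≤ d)
    (ρ : Matrix.specialOrthogonalGroup (Fin 3) ℝ →* Matrix.orthogonalGroup (Fin d) ℝ)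
    (hirr : ∀ W : Submodule ℝ (EuclideanSpace ℝ (Fin d)),
      (∀ R : Matrix.specialOrthogonalGroup (Fin 3) ℝ, ∀ w ∈ W,
        WithLp.toLp 2 ((ρ R : Matrix (Fin d) (Fin d) ℝ).mulVec w) ∈ W) →
      W = ⊥ ∨ W = ⊤)
    (Y Ytil : EuclideanSpace ℝ (Fin 3) → EuclideanSpace ℝ (Fin d))
    (hY : ∀ R : Matrix.specialOrthogonalGroup (Fin 3) ℝ,
      ∀ x : EuclideanSpace ℝ (Fin 3), ‖x‖ = 1 →
        Y (WithLp.toLp 2 ((R : Matrix (Fin 3) (Fin 3) ℝ).mulVec x))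
          = (ρ R : Matrix (Fin d) (Fin d) ℝ).mulVec (Y x))
    (hYtil : ∀ R : Matrix.specialOrthogonalGroup (Fin 3) ℝ,
      ∀ x : EuclideanSpace ℝ (Fin 3), ‖x‖ = 1 →
        Ytil (WithLp.toLp 2 ((R : Matrix (Fin 3) (Fin 3) ℝ).mulVec x))
          = (ρ R : Matrix (Fin d) (Fin d) ℝ).mulVec (Ytil x))
    (hnormY : ∀ x : EuclideanSpace ℝ (Fin 3), ‖x‖ = 1 → ‖Y x‖ = 1)
    (hnormYtil : ∀ x : EuclideanSpace ℝ (Fin 3), ‖x‖ = 1 → ‖Ytil x‖ = 1) :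
    (∀ x : EuclideanSpace ℝ (Fin 3), ‖x‖ = 1 → Ytil x = Y x)
    ∨ (∀ x : EuclideanSpace ℝ (Fin 3), ‖x‖ = 1 → Ytil x = -Y x) :=
  equivariant_sphere_map_unique_up_to_sign_general d ρ hirr Y Ytil hY hYtil hnormY hnormYtil
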